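/- arXiv:1408.3370 — 3 statements merged into one kernel-verified Lean document; each statement's English description precedes it below -/
import Mathlib

section
/- For subsets J ⊆ J' ⊆ Δ and any w ∈ W^{J'}, the set-theoretic difference Φ_J(w) \ Φ_{J'}(w) is contained in the set of negative roots Φ⁻. -/
/-! Common framework: a reduced (crystallographic) root system `Φ` in a real vector
space `V`, with Weyl group `W` (generated by the reflections `s_α`, `α ∈ Φ`, inside the
group of linear automorphisms of `V`), a base `Δ` of simple roots with positive system
`Pos = Φ⁺`, and the associated combinatorics. -/

open scoped Classical Pointwise

namespace PaperSp

variable {V : Type} [AddCommGroup V] [Module ℝ V]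

/-- The data of a reduced crystallographic root system in `V`:  a finite spanning set
`Phi` of nonzero vectors together with, for each root `α`, a linear functional
`pairing α = ⟨·, α∨⟩` taking the value `2` at `α`, such that the associated reflections
`s_α : β ↦ β − ⟨β, α∨⟩α` preserve `Phi`, all pairings are integral, and the only
multiples of a root `α` which are roots are `±α`. -/
structure RootSystemData (V : Type) [AddCommGroup V] [Module ℝ V] : Type where
  Phi : Set V
  pairing : V → V →ₗ[ℝ] ℝ
  pairing_self : ∀ α, α ∈ Phi → pairing α α = 2
  finite : Phi.Finite
  span_top : Submodule.span ℝ Phi = ⊤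
  zero_not_mem : (0 : V) ∉ Phi
  crystallographic : ∀ α ∈ Phi, ∀ β ∈ Phi, ∃ n : ℤ, pairing α β = (n : ℝ)
  reduced : ∀ α ∈ Phi, ∀ t : ℝ, t • α ∈ Phi → t = 1 ∨ t = -1
  reflect_mem : ∀ α ∈ Phi, ∀ β ∈ Phi, β - pairing α β • α ∈ Phi

/-- The reflection `s_α` associated to a root `α` (the identity if `α ∉ Φ`). -/
noncomputable def RootSystemData.refl (R : RootSystemData V) (α : V) : V ≃ₗ[ℝ] V :=
  if h : α ∈ R.Phi then Module.reflection (R.pairing_self α h) else 1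

/-- The set of reflections `{s_α : α ∈ K}` associated to a set `K` of roots. -/
noncomputable def refls (R : RootSystemData V) (K : Set V) : Set (V ≃ₗ[ℝ] V) :=
  {s | ∃ α ∈ K, s = R.refl α}

/-- The Weyl group `W`, generated by all reflections `s_α`, `α ∈ Φ`. -/
noncomputable def weylGroup (R : RootSystemData V) : Subgroup (V ≃ₗ[ℝ] V) :=
  Subgroup.closure (refls R R.Phi)

/-- The subgroup `W_J` generated by the reflections `s_α`, `α ∈ J`. -/
noncomputable def WsubJ (R : RootSystemData V) (J : Set V) : Subgroup (V ≃ₗ[ℝ] V) :=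
  Subgroup.closure (refls R J)

/-- The word length of `w` with respect to a generating set `S` of a group. -/
noncomputable def lengthWrt {G : Type*} [Group G] (S : Set G) (w : G) : ℕ :=
  sInf {n | ∃ ls : List G, ls.length = n ∧ (∀ x ∈ ls, x ∈ S) ∧ ls.prod = w}

/-- The length function `ℓ` on `W` with respect to the simple reflections
`S = {s_α : α ∈ Δ}`. -/
noncomputable def len (R : RootSystemData V) (Δ : Set V) (w : V ≃ₗ[ℝ] V) : ℕ :=
  lengthWrt (refls R Δ) w

/-- `Pos` and `Δ` form a positive system with base `Δ` for the root system `R`: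
`Φ = Pos ⊔ (−Pos)`, `Δ ⊆ Pos` is linearly independent, and every positive root is a
nonnegative integral combination of simple roots. -/
structure IsBase (R : RootSystemData V) (Pos Δ : Set V) : Prop where
  pos_sub : Pos ⊆ R.Phi
  mem_or_neg : ∀ α ∈ R.Phi, α ∈ Pos ∨ -α ∈ Pos
  not_both : ∀ α : V, ¬(α ∈ Pos ∧ -α ∈ Pos)
  delta_sub : Δ ⊆ Pos
  indep : LinearIndependent ℝ (fun a : Δ => (a : V))
  decomp : ∀ β ∈ Pos, ∃ c : V →₀ ℕ, (c.support : Set V) ⊆ Δ ∧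
    β = c.sum (fun a m => (m : ℝ) • a)

/-- The set `W^J = {w ∈ W : w(α) ∈ Φ⁺ for all α ∈ J}` of minimal length representatives
of `W/W_J`. -/
noncomputable def WupJ (R : RootSystemData V) (Pos : Set V) (J : Set V) :
    Set (V ≃ₗ[ℝ] V) :=
  {w | w ∈ weylGroup R ∧ ∀ α ∈ J, w α ∈ Pos}

/-- The set `V^J = W^J \ ⋃_{α ∈ Δ\J} W^{J∪{α}}`. -/
noncomputable def VupJ (R : RootSystemData V) (Pos Δ : Set V) (J : Set V) :
    Set (V ≃ₗ[ℝ] V) :=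
  {w | w ∈ WupJ R Pos J ∧ ∀ α ∈ Δ, α ∉ J → w ∉ WupJ R Pos (J ∪ {α})}

/-- `Φ_J(1) = Φ⁻ \ (Φ⁻ ∩ W_J·J)`. -/
noncomputable def PhiJone (R : RootSystemData V) (Pos : Set V) (J : Set V) : Set V :=
  (R.Phi \ Pos) \ {β | ∃ v ∈ WsubJ R J, ∃ α ∈ J, β = v α}

/-- `Φ_J(w) = w · Φ_J(1)`. -/
noncomputable def PhiJ (R : RootSystemData V) (Pos : Set V) (J : Set V)
    (w : V ≃ₗ[ℝ] V) : Set V :=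
  (fun x => w x) '' (PhiJone R Pos J)

/-- `hProjJ R Pos J pJ` says that `pJ` is the projection `w ↦ (w)^J` sending an element
of `W` to the unique element of `W^J` in the coset `w W_J`. -/
noncomputable def IsProjJ (R : RootSystemData V) (Pos : Set V) (J : Set V)
    (pJ : (V ≃ₗ[ℝ] V) → (V ≃ₗ[ℝ] V)) : Prop :=
  ∀ w ∈ weylGroup R, pJ w ∈ WupJ R Pos J ∧ (pJ w)⁻¹ * w ∈ WsubJ R J

/-- The product `s_i ⋯ s_1` of the first `i` members of a sequence in a group. -/
noncomputable def chainProd {G : Type*} [Group G] (s : ℕ → G) (i : ℕ) : G :=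
  (((List.range' 1 i).map s).reverse).prod

/-- The chain `w^(0) = w`, `w^(i) = (s_i ⋯ s_1 w)^J` associated to `w` and a sequence
of simple reflections. -/
noncomputable def chainElt {G : Type*} [Group G] (pJ : G → G) (s : ℕ → G) (w : G)
    (i : ℕ) : G :=
  if i = 0 then w else pJ (chainProd s i * w)

/-- The partial order `<_J`:  `w <_J w'` iff there are simple reflections
`s_1, …, s_r` (`r ≥ 1`) such that, with `w^(i) = (s_i ⋯ s_1 w)^J`, the lengths
`ℓ(w^(i))` are strictly increasing and `w^(r) = w'`.  Taking `pJ = id`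
(and `J = ∅`) gives the weak left order `<_∅`. -/
noncomputable def ltJ {G : Type*} [Group G] (S : Set G) (ℓ : G → ℕ) (pJ : G → G)
    (w w' : G) : Prop :=
  ∃ r : ℕ, 1 ≤ r ∧ ∃ s : ℕ → G,
    (∀ m, 1 ≤ m → m ≤ r → s m ∈ S) ∧
    (∀ m, 1 ≤ m → m ≤ r → ℓ (chainElt pJ s w (m - 1)) < ℓ (chainElt pJ s w m)) ∧
    chainElt pJ s w r = w'

/-- `w` is the longest element of a subgroup `H` of `W` (with respect to `ℓ`). -/
noncomputable def IsLongestIn (R : RootSystemData V) (Δ : Set V)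
    (H : Subgroup (V ≃ₗ[ℝ] V)) (w : V ≃ₗ[ℝ] V) : Prop :=
  w ∈ H ∧ ∀ v ∈ H, len R Δ v ≤ len R Δ w

end PaperSp

/-! If `wβ ∉ Φ_{J'}(w)` then `β ∈ W_{J'}·J'`, so `-β` is a positive root in the
span of `J'`. As `Δ` is linearly independent, `-β` is then a nonnegative combination of `J'`, and
since `w` sends `J'` to positive roots, `-wβ` lies in the cone spanned by `Δ`. This cone is salient,
so `wβ`, a nonzero root, cannot be positive. -/

namespace PointedCone

variable {𝕜 E : Type*} [Field 𝕜] [LinearOrder 𝕜] [IsStrictOrderedRing 𝕜] [AddCommGroup E]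
  [Module 𝕜 E] {s t : Set E} {x : E}

lemma eq_zero_of_mem_hull_of_neg_mem_hull (hs : LinearIndepOn 𝕜 id s) (hx : x ∈ hull 𝕜 s)
    (hnx : -x ∈ hull 𝕜 s) : x = 0 := by
  obtain ⟨c, hcs, hc, rfl⟩ := mem_hull_set.mp hx
  obtain ⟨d, hds, hd, hdx⟩ := mem_hull_set.mp hnx
  have hcd : c + d = 0 := by
    refine linearIndepOn_iff.mp hs _ ?_ ?_
    · exact Finsupp.mem_supported _ _ |>.mpr
        ((Finset.coe_subset.mpr Finsupp.support_add).trans (by simpa using ⟨hcs, hds⟩))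
    · rw [Finsupp.linearCombination_apply, Finsupp.sum_add_index' (by simp) (by simp [add_smul])]
      simp [hdx]
  have hc0 : c = 0 := by
    ext a
    have hcda := DFunLike.congr_fun hcd a
    simp only [Finsupp.coe_add, Pi.add_apply, Finsupp.coe_zero, Pi.zero_apply] at hcda ⊢
    linarith [hc a, hd a]
  rw [hc0, Finsupp.sum_zero_index]

lemma mem_hull_of_mem_hull_of_mem_span (hs : LinearIndepOn 𝕜 id s) (hts : t ⊆ s)
    (hx : x ∈ hull 𝕜 s) (hxt : x ∈ Submodule.span 𝕜 t) : x ∈ hull 𝕜 t := by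
  obtain ⟨c, hcs, hc, rfl⟩ := mem_hull_set.mp hx
  obtain ⟨d, hdt, hdx⟩ := Submodule.mem_span_set.mp hxt
  have hcd : c = d := by
    refine linearIndepOn_iffₛ.mp hs c hcs d (hdt.trans hts) ?_
    simpa [Finsupp.linearCombination_apply] using hdx.symm
  exact mem_hull_set.mpr ⟨c, hcd ▸ hdt, hc, rfl⟩

end PointedCone

lemma Subgroup.closure_le_stabilizer_of_involutive {G α : Type*} [Group G] [MulAction G α]
    {S : Set G} {A : Set α} (hS : ∀ g ∈ S, g⁻¹ = g) (hA : ∀ g ∈ S, ∀ a ∈ A, g • a ∈ A) :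
    Subgroup.closure S ≤ MulAction.stabilizer G A := by
  refine (Subgroup.closure_le _).mpr fun g hg => MulAction.mem_stabilizer_set.mpr fun a => ?_
  refine ⟨fun ha => ?_, hA g hg a⟩
  have hgg : g * g = 1 := mul_eq_one_iff_eq_inv.mpr (hS g hg).symm
  simpa only [smul_smul, hgg, one_smul] using hA g hg _ ha

namespace PaperSp

variable {V : Type} [AddCommGroup V] [Module ℝ V]

open PointedCone

namespace RootSystemData

variable (R : RootSystemData V)

lemma refl_apply_of_mem {α : V} (hα : α ∈ R.Phi) (x : V) : R.refl α x = x - R.pairing α x • α := by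
  rw [refl, dif_pos hα, Module.reflection_apply]

lemma refl_of_notMem {α : V} (hα : α ∉ R.Phi) : R.refl α = 1 := dif_neg hα

lemma refl_inv (α : V) : (R.refl α)⁻¹ = R.refl α := by
  by_cases hα : α ∈ R.Phi
  · rw [refl, dif_pos hα]; exact Module.reflection_symm _
  · rw [refl_of_notMem R hα, inv_one]

end RootSystemData

lemma weylGroup_le_stabilizer_phi (R : RootSystemData V) :
    weylGroup R ≤ MulAction.stabilizer (V ≃ₗ[ℝ] V) R.Phi := by
  refine Subgroup.closure_le_stabilizer_of_involutive ?_ ?_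
  · rintro _ ⟨α, -, rfl⟩; exact R.refl_inv α
  · rintro _ ⟨α, hα, rfl⟩ β hβ
    rw [LinearEquiv.smul_def, R.refl_apply_of_mem hα]
    exact R.reflect_mem α hα β hβ

lemma WsubJ_le_stabilizer_span (R : RootSystemData V) (J : Set V) :
    WsubJ R J ≤ MulAction.stabilizer (V ≃ₗ[ℝ] V) (Submodule.span ℝ J : Set V) := by
  refine Subgroup.closure_le_stabilizer_of_involutive ?_ ?_
  · rintro _ ⟨α, -, rfl⟩; exact R.refl_inv α
  · rintro _ ⟨α, hα, rfl⟩ x hx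
    rw [LinearEquiv.smul_def]
    by_cases hαΦ : α ∈ R.Phi
    · rw [R.refl_apply_of_mem hαΦ]
      exact sub_mem hx (Submodule.smul_mem _ _ (Submodule.subset_span hα))
    · rwa [R.refl_of_notMem hαΦ]

lemma IsBase.linearIndepOn {R : RootSystemData V} {Pos Δ : Set V} (hB : IsBase R Pos Δ) :
    LinearIndepOn ℝ id Δ :=
  hB.indep

lemma IsBase.pos_subset_hull {R : RootSystemData V} {Pos Δ : Set V} (hB : IsBase R Pos Δ) :
    Pos ⊆ hull ℝ Δ := by
  intro β hβ
  obtain ⟨c, hc, rfl⟩ := hB.decomp β hβ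
  refine Submodule.sum_mem _ fun a ha => ?_
  dsimp only
  rw [Nat.cast_smul_eq_nsmul ℝ]
  exact nsmul_mem (subset_hull (hc ha)) _

theorem statement_0_general {V : Type} [AddCommGroup V] [Module ℝ V]
    (R : RootSystemData V) (Pos Δ : Set V) (hBase : IsBase R Pos Δ)
    (J J' : Set V) (hJ'Δ : J' ⊆ Δ)
    (w : V ≃ₗ[ℝ] V) (hw : w ∈ WupJ R Pos J') :
    PhiJ R Pos J w \ PhiJ R Pos J' w ⊆ R.Phi \ Pos := by
  rintro _ ⟨⟨β, ⟨⟨hβΦ, hβPos⟩, -⟩, rfl⟩, hβJ'⟩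
  obtain ⟨v, hv, α, hα, rfl⟩ : ∃ v ∈ WsubJ R J', ∃ α ∈ J', β = v α := by
    by_contra h
    exact hβJ' ⟨β, ⟨⟨hβΦ, hβPos⟩, h⟩, rfl⟩
  have hwβΦ : w (v α) ∈ R.Phi :=
    (MulAction.mem_stabilizer_set.mp (weylGroup_le_stabilizer_phi R hw.1) _).mpr hβΦ
  refine ⟨hwβΦ, fun hwβPos => R.zero_not_mem ?_⟩
  have hnegPos : -v α ∈ Pos := (hBase.mem_or_neg _ hβΦ).resolve_left hβPos
  have hnegSpan : -v α ∈ Submodule.span ℝ J' := by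
    rw [← map_neg]
    exact (MulAction.mem_stabilizer_set.mp (WsubJ_le_stabilizer_span R J' hv) _).mpr
      (neg_mem (Submodule.subset_span hα))
  have hnegHull : -v α ∈ hull ℝ J' :=
    mem_hull_of_mem_hull_of_mem_span hBase.linearIndepOn hJ'Δ
      (hBase.pos_subset_hull hnegPos) hnegSpan
  have hw_cone : hull ℝ J' ≤ (hull ℝ Δ).comap (w : V →ₗ[ℝ] V) :=
    Submodule.span_le.mpr fun a ha => hBase.pos_subset_hull (hw.2 a ha)
  have hwβ_zero : w (v α) = 0 :=
    eq_zero_of_mem_hull_of_neg_mem_hull hBase.linearIndepOn (hBase.pos_subset_hull hwβPos)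
      (by simpa using hw_cone hnegHull)
  exact hwβ_zero ▸ hwβΦ

/-- For subsets `J ⊆ J' ⊆ Δ` and any `w ∈ W^{J'}`, the difference
`Φ_J(w) \ Φ_{J'}(w)` is contained in the set `Φ⁻ = Φ \ Φ⁺` of negative roots. -/
theorem statement_0 {V : Type} [AddCommGroup V] [Module ℝ V]
    (R : RootSystemData V) (Pos Δ : Set V) (hBase : IsBase R Pos Δ)
    (J J' : Set V) (hJJ' : J ⊆ J') (hJ'Δ : J' ⊆ Δ)
    (w : V ≃ₗ[ℝ] V) (hw : w ∈ WupJ R Pos J') :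
    PhiJ R Pos J w \ PhiJ R Pos J' w ⊆ R.Phi \ Pos :=
  statement_0_general R Pos Δ hBase J J' hJ'Δ w hw

end PaperSp
end

section
/- There exists a sequence w_Δ = w_0, w_1, …, w_r = id in W = S_{l+1} such that for every 1 ≤ i ≤ r, either w_{i−1} <_∅ w_i in the weak left order, or w_i = u w_{i−1} for some rotation u ∈ Ω. -/
/-!
STATEMENT 9: In W = S_{l+1} there is a sequence from the longest element w_Δ to the
identity in which each step either goes up in the weak left order or is
left-multiplication by a rotation.
-/

open Equiv

/-- The number of inversions of a permutation of `{0, …, l}` (the Coxeter length with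
respect to the adjacent transpositions). -/
def invLen (l : ℕ) (w : Equiv.Perm (Fin (l + 1))) : ℕ :=
  (Finset.univ.filter (fun p : Fin (l + 1) × Fin (l + 1) => p.1 < p.2 ∧ w p.2 < w p.1)).card

/-- The adjacent transposition `s_j` exchanging `j` and `j+1` (1-indexed: `s_j` exchanges
positions `j` and `j+1`, i.e. the `Fin`-indices `j-1` and `j`), for `1 ≤ j ≤ l`. -/
def adjTransp (l : ℕ) (j : ℕ) : Equiv.Perm (Fin (l + 1)) :=
  if h : 1 ≤ j ∧ j ≤ l then Equiv.swap ⟨j - 1, by omega⟩ ⟨j, by omega⟩ else 1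

/-- The product `s_{j_m} ⋯ s_{j_1}` of the first `m` of a sequence of adjacent
transpositions (with indices `j_1, …, j_m`). -/
def adjProd (l : ℕ) (js : ℕ → ℕ) (m : ℕ) : Equiv.Perm (Fin (l + 1)) :=
  (((List.range' 1 m).map (fun k => adjTransp l (js k))).reverse).prod

/-- The weak left order on `S_{l+1}`:  `w <_∅ w'` iff `w' = s_{j_r} ⋯ s_{j_1} w` for some
`r ≥ 1` and indices `j_1, …, j_r ∈ {1, …, l}` with
`ℓ(s_{j_m} ⋯ s_{j_1} w) = ℓ(w) + m` for all `1 ≤ m ≤ r`. -/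
def weakLtA (l : ℕ) (w w' : Equiv.Perm (Fin (l + 1))) : Prop :=
  ∃ r : ℕ, 1 ≤ r ∧ ∃ js : ℕ → ℕ,
    (∀ m, 1 ≤ m → m ≤ r → 1 ≤ js m ∧ js m ≤ l) ∧
    (∀ m, 1 ≤ m → m ≤ r → invLen l (adjProd l js m * w) = invLen l w + m) ∧
    adjProd l js r * w = w'

/-- The longest element `w_Δ` of `S_{l+1}`, i.e. `k ↦ l + 2 − k` in 1-indexed notation. -/
def longestPermA (l : ℕ) : Equiv.Perm (Fin (l + 1)) :=
  Function.Involutive.toPerm (fun k => ⟨l - k.val, by omega⟩)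
    (by intro k; ext; simp; omega)

/-!
If the inversion set of `x` is strictly contained in that of `y`, then at a descent of `y x⁻¹`
there is an adjacent transposition `s_j` with `Inv x ⊊ Inv (s_j x) ⊆ Inv y`; iterating,
`x <_∅ y`. Let `z_k` fix `0, …, k - 1` and reverse `k, …, l`, so `z_0 = w_Δ` and `z_l = 1`, and
let `y_k = c_(l-k) z_(k+1)`. The inversions of `y_k` are all pairs `u < v` with `k < v`, which
contain those of `z_k`, and `z_(k+1) = c_(k+1) y_k`. Hence `z_0, y_0, z_1, …, y_(l-1), z_l`
is the required sequence.
-/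

open Relation

theorem Equiv.Perm.exists_apply_succ_lt_apply_castSucc {n : ℕ} {σ : Perm (Fin (n + 1))}
    (hσ : σ ≠ 1) : ∃ a : Fin n, σ a.succ < σ a.castSucc := by
  by_contra! h
  have hmono : StrictMono σ := Fin.strictMono_iff_lt_succ.2 fun a =>
    (h a).lt_of_ne (σ.injective.ne Fin.castSucc_lt_succ.ne)
  exact hσ (Equiv.ext fun p => congrFun hmono.eq_id p)

theorem Fin.swap_castSucc_succ_lt_swap_iff {n : ℕ} (a : Fin n) {c d : Fin (n + 1)}
    (h : ¬(c = a.castSucc ∧ d = a.succ)) (h' : ¬(c = a.succ ∧ d = a.castSucc)) :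
    swap a.castSucc a.succ c < swap a.castSucc a.succ d ↔ c < d := by
  simp only [swap_apply_def, Fin.ext_iff, Fin.lt_def, Fin.val_castSucc, Fin.val_succ] at *
  split_ifs <;> simp only [Fin.val_castSucc, Fin.val_succ] <;> omega

def invSet (l : ℕ) (w : Perm (Fin (l + 1))) : Finset (Fin (l + 1) × Fin (l + 1)) :=
  Finset.univ.filter fun p => p.1 < p.2 ∧ w p.2 < w p.1

@[simp]
theorem mem_invSet {l : ℕ} {w : Perm (Fin (l + 1))} {p : Fin (l + 1) × Fin (l + 1)} :
    p ∈ invSet l w ↔ p.1 < p.2 ∧ w p.2 < w p.1 := by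
  simp [invSet]

theorem invLen_eq_card_invSet (l : ℕ) (w : Perm (Fin (l + 1))) :
    invLen l w = (invSet l w).card := rfl

section AdjacentSwap

variable {l : ℕ} (x : Perm (Fin (l + 1))) (a : Fin l)

theorem adjTransp_val_add_one : adjTransp l (a + 1) = swap a.castSucc a.succ := by
  rw [adjTransp, dif_pos (by omega)]
  rfl

theorem invSet_swap_mul (h : x.symm a.castSucc < x.symm a.succ) :
    invSet l (swap a.castSucc a.succ * x) =
      insert (x.symm a.castSucc, x.symm a.succ) (invSet l x) := by
  ext ⟨u, v⟩
  simp only [mem_invSet, Finset.mem_insert, Prod.mk.injEq, Perm.mul_apply]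
  by_cases huv : u = x.symm a.castSucc ∧ v = x.symm a.succ
  · obtain ⟨rfl, rfl⟩ := huv
    simpa using h
  · simp only [huv, false_or]
    refine and_congr_right fun hlt => Fin.swap_castSucc_succ_lt_swap_iff a ?_ ?_
    · rintro ⟨hv, hu⟩
      rw [← Equiv.eq_symm_apply] at hu hv
      exact lt_asymm hlt (hu ▸ hv ▸ h)
    · rintro ⟨hv, hu⟩
      rw [← Equiv.eq_symm_apply] at hu hv
      exact huv ⟨hu, hv⟩

theorem symm_castSucc_symm_succ_notMem_invSet :
    (x.symm a.castSucc, x.symm a.succ) ∉ invSet l x := by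
  simp [Fin.castSucc_lt_succ.le]

theorem invLen_swap_mul (h : x.symm a.castSucc < x.symm a.succ) :
    invLen l (swap a.castSucc a.succ * x) = invLen l x + 1 := by
  rw [invLen_eq_card_invSet, invSet_swap_mul x a h,
    Finset.card_insert_of_notMem (symm_castSucc_symm_succ_notMem_invSet x a),
    invLen_eq_card_invSet]

end AdjacentSwap

def weakCover (l : ℕ) (x y : Perm (Fin (l + 1))) : Prop :=
  ∃ j, 1 ≤ j ∧ j ≤ l ∧ y = adjTransp l j * x ∧ invLen l y = invLen l x + 1

section InversionSets

variable {l : ℕ}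

/-- A descent of `y x⁻¹` at the values `a, a + 1` gives an inversion of `y` over these values
that `x` lacks; swapping the values `a, a + 1` in `x` adds exactly this inversion. -/
theorem exists_weakCover_invSet_subset {x y : Perm (Fin (l + 1))} (hxy : x ≠ y)
    (h : invSet l x ⊆ invSet l y) :
    ∃ x', weakCover l x x' ∧ invSet l x' ⊆ invSet l y := by
  obtain ⟨a, ha⟩ := (y * x⁻¹).exists_apply_succ_lt_apply_castSucc
    (fun h1 => hxy (mul_inv_eq_one.mp h1).symm)
  have hy : y (x.symm a.succ) < y (x.symm a.castSucc) := ha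
  have hpq : x.symm a.castSucc < x.symm a.succ := by
    refine lt_of_le_of_ne (not_lt.mp fun hqp => ?_) (x.symm.injective.ne Fin.castSucc_lt_succ.ne)
    have hinv : (x.symm a.succ, x.symm a.castSucc) ∈ invSet l x :=
      mem_invSet.mpr ⟨hqp, by simp⟩
    exact lt_asymm hy (mem_invSet.mp (h hinv)).2
  refine ⟨swap a.castSucc a.succ * x,
    ⟨a + 1, by omega, a.isLt, (adjTransp_val_add_one a).symm ▸ rfl, invLen_swap_mul x a hpq⟩, ?_⟩
  rw [invSet_swap_mul x a hpq]
  exact Finset.insert_subset (mem_invSet.mpr ⟨hpq, hy⟩) h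

theorem reflTransGen_weakCover_of_invSet_subset {x y : Perm (Fin (l + 1))}
    (h : invSet l x ⊆ invSet l y) :
    ReflTransGen (weakCover l) x y := by
  by_cases hxy : x = y
  · exact hxy ▸ .refl
  obtain ⟨x', hcov, hsub⟩ := exists_weakCover_invSet_subset hxy h
  exact .head hcov (reflTransGen_weakCover_of_invSet_subset hsub)
termination_by invLen l y - invLen l x
decreasing_by
  have := Finset.card_le_card hsub
  rw [← invLen_eq_card_invSet, ← invLen_eq_card_invSet] at this
  obtain ⟨_, _, _, _, hlen⟩ := hcov
  omega

end InversionSets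

section WeakOrder

variable {l : ℕ}

theorem adjProd_succ (js : ℕ → ℕ) (m : ℕ) :
    adjProd l js (m + 1) = adjTransp l (js (m + 1)) * adjProd l js m := by
  simp [adjProd, List.range'_concat, Nat.add_comm 1 m]

theorem adjProd_congr {js js' : ℕ → ℕ} {m : ℕ} (h : ∀ k, 1 ≤ k → k ≤ m → js k = js' k) :
    adjProd l js m = adjProd l js' m := by
  unfold adjProd
  congr 2
  refine List.map_congr_left fun k hk => ?_
  rw [List.mem_range'_1] at hk
  rw [h k (by omega) (by omega)]

theorem weakLtA_of_weakCover {x y : Perm (Fin (l + 1))} (h : weakCover l x y) : weakLtA l x y := by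
  obtain ⟨j, hj1, hjl, rfl, hlen⟩ := h
  refine ⟨1, le_rfl, fun _ => j, fun _ _ _ => ⟨hj1, hjl⟩, fun m hm hm1 => ?_, by simp [adjProd]⟩
  obtain rfl : m = 1 := by omega
  simpa [adjProd] using hlen

theorem weakLtA.trans_weakCover {x y z : Perm (Fin (l + 1))} (hxy : weakLtA l x y)
    (hyz : weakCover l y z) : weakLtA l x z := by
  obtain ⟨r, hr, js, hjs, hlen, rfl⟩ := hxy
  obtain ⟨j, hj1, hjl, rfl, hlen'⟩ := hyz
  have hprefix : ∀ m ≤ r, adjProd l (Function.update js (r + 1) j) m = adjProd l js m :=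
    fun m hm => adjProd_congr fun k _ hk => Function.update_of_ne (by omega) _ _
  have hlast : adjProd l (Function.update js (r + 1) j) (r + 1) * x =
      adjTransp l j * (adjProd l js r * x) := by
    rw [adjProd_succ, hprefix r le_rfl, Function.update_self, mul_assoc]
  refine ⟨r + 1, by omega, Function.update js (r + 1) j, fun m hm1 hm => ?_,
    fun m hm1 hm => ?_, hlast⟩
  · rcases hm.lt_or_eq with hm | rfl
    · rw [Function.update_of_ne (by omega)]
      exact hjs m hm1 (by omega)
    · simpa using ⟨hj1, hjl⟩
  · rcases hm.lt_or_eq with hm | rfl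
    · rw [hprefix m (by omega)]
      exact hlen m hm1 (by omega)
    · rw [hlast, hlen', hlen r hr le_rfl, add_assoc]

theorem weakLtA_of_transGen {x y : Perm (Fin (l + 1))} (h : TransGen (weakCover l) x y) :
    weakLtA l x y := by
  induction h with
  | single h => exact weakLtA_of_weakCover h
  | tail _ hyz ih => exact ih.trans_weakCover hyz

theorem weakLtA_of_invSet_subset {x y : Perm (Fin (l + 1))} (hxy : x ≠ y)
    (h : invSet l x ⊆ invSet l y) : weakLtA l x y :=
  weakLtA_of_transGen ((reflTransGen_iff_eq_or_transGen.mp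
    (reflTransGen_weakCover_of_invSet_subset h)).resolve_left (Ne.symm hxy))

end WeakOrder

section Rotations

variable {l : ℕ}

theorem val_finRotate_pow (m : ℕ) (v : Fin (l + 1)) :
    ((finRotate (l + 1) ^ m) v : ℕ) = (v + m) % (l + 1) := by
  induction m with
  | zero => simp [Nat.mod_eq_of_lt v.isLt]
  | succ m ih =>
    rw [pow_succ', Perm.mul_apply, finRotate_apply, Fin.val_add, ih]
    simp [← add_assoc]

theorem finRotate_pow_self : finRotate (l + 1) ^ (l + 1) = 1 :=
  Equiv.ext fun v => Fin.ext (by simp [val_finRotate_pow, Nat.mod_eq_of_lt v.isLt])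

end Rotations

def revFrom (l i : ℕ) : Perm (Fin (l + 1)) :=
  Function.Involutive.toPerm (fun p => if h : p.val < i then p else ⟨l + i - p.val, by omega⟩)
    (fun p => by
      dsimp only
      split_ifs <;> simp_all [Fin.ext_iff] <;> omega)

section RevFrom

variable {l : ℕ}

theorem val_revFrom (i : ℕ) (p : Fin (l + 1)) :
    (revFrom l i p : ℕ) = if p.val < i then p.val else l + i - p.val := by
  change ((if h : p.val < i then p else ⟨l + i - p.val, by omega⟩ : Fin (l + 1)) : ℕ) = _
  split_ifs <;> rfl

theorem revFrom_zero : revFrom l 0 = longestPermA l :=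
  Equiv.ext fun p => Fin.ext <| by
    simp only [val_revFrom, Nat.not_lt_zero, if_false, Nat.add_zero]
    rfl

theorem revFrom_self : revFrom l l = 1 :=
  Equiv.ext fun p => Fin.ext (by rw [val_revFrom]; split_ifs <;> simp; omega)

theorem val_finRotate_pow_mul_revFrom {i : ℕ} (hi : i < l) (p : Fin (l + 1)) :
    ((finRotate (l + 1) ^ (l - i) * revFrom l (i + 1)) p : ℕ) =
      if p.val ≤ i then p.val + (l - i) else l - p.val := by
  rw [Perm.mul_apply, val_finRotate_pow, val_revFrom]
  split_ifs with h h' h'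
  · exact Nat.mod_eq_of_lt (by omega)
  · omega
  · omega
  · rw [show l + (i + 1) - p + (l - i) = l - p + (l + 1) by omega, Nat.add_mod_right]
    exact Nat.mod_eq_of_lt (by omega)

theorem invSet_revFrom_subset {i : ℕ} (hi : i < l) :
    invSet l (revFrom l i) ⊆ invSet l (finRotate (l + 1) ^ (l - i) * revFrom l (i + 1)) := by
  rintro ⟨u, v⟩ huv
  simp only [mem_invSet, Fin.lt_def, val_revFrom, val_finRotate_pow_mul_revFrom hi] at huv ⊢
  split_ifs at huv ⊢ <;> omega

end RevFrom

def revFromChain (l n : ℕ) : Perm (Fin (l + 1)) :=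
  if Even n then revFrom l (n / 2) else finRotate (l + 1) ^ (l - n / 2) * revFrom l (n / 2 + 1)

theorem revFromChain_two_mul (l k : ℕ) : revFromChain l (2 * k) = revFrom l k := by
  simp [revFromChain]

theorem revFromChain_two_mul_add_one (l k : ℕ) :
    revFromChain l (2 * k + 1) = finRotate (l + 1) ^ (l - k) * revFrom l (k + 1) := by
  simp [revFromChain, Nat.mul_add_div two_pos]

theorem statement_9_general (l : ℕ) :
    ∃ (r : ℕ) (w : ℕ → Equiv.Perm (Fin (l + 1))),
      w 0 = longestPermA l ∧ w r = 1 ∧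
      ∀ i, 1 ≤ i → i ≤ r →
        weakLtA l (w (i - 1)) (w i) ∨
        ∃ u : Equiv.Perm (Fin (l + 1)), (∃ m : ℕ, u = (finRotate (l + 1)) ^ m) ∧
          w i = u * w (i - 1) := by
  refine ⟨2 * l, revFromChain l, by simpa [revFrom_zero] using revFromChain_two_mul l 0,
    by rw [revFromChain_two_mul, revFrom_self], fun i hi1 hil => ?_⟩
  obtain ⟨k, rfl | rfl⟩ := Nat.even_or_odd' i
  · obtain ⟨k, rfl⟩ : ∃ k', k = k' + 1 := ⟨k - 1, by omega⟩
    rw [show 2 * (k + 1) - 1 = 2 * k + 1 by omega, revFromChain_two_mul,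
      revFromChain_two_mul_add_one]
    refine .inr ⟨_, ⟨k + 1, rfl⟩, ?_⟩
    rw [← mul_assoc, ← pow_add, show k + 1 + (l - k) = l + 1 by omega, finRotate_pow_self, one_mul]
  · rw [Nat.add_sub_cancel, revFromChain_two_mul, revFromChain_two_mul_add_one]
    by_cases heq : revFrom l k = finRotate (l + 1) ^ (l - k) * revFrom l (k + 1)
    · -- only for `k = 0`; the step is then the trivial rotation `c_0`
      exact .inr ⟨1, ⟨0, (pow_zero _).symm⟩, by rw [one_mul, heq]⟩
    · exact .inl (weakLtA_of_invSet_subset heq (invSet_revFrom_subset (by omega)))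

theorem statement_9 (l : ℕ) (hl : 1 ≤ l) :
    ∃ (r : ℕ) (w : ℕ → Equiv.Perm (Fin (l + 1))),
      w 0 = longestPermA l ∧ w r = 1 ∧
      ∀ i, 1 ≤ i → i ≤ r →
        weakLtA l (w (i - 1)) (w i) ∨
        ∃ u : Equiv.Perm (Fin (l + 1)), (∃ m : ℕ, u = (finRotate (l + 1)) ^ m) ∧
          w i = u * w (i - 1) :=
  statement_9_general l
end

section
/- There exists a sequence w_Δ = w_0, w_1, …, w_r = id in the group W of signed permutations such that for every 1 ≤ i ≤ r, either w_{i−1} <_∅ w_i in the weak left order, or w_i = u₀ w_{i−1}. -/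
open Equiv

/-- The set of signed permutations: bijections `w` of `ℤ` with `w(−a) = −w(a)` which fix
every integer of absolute value `> l` (such a bijection automatically preserves
`{−l, …, −1, 1, …, l}`). -/
def SignedPermSet (l : ℕ) : Set (Equiv.Perm ℤ) :=
  {w | (∀ a : ℤ, w (-a) = -w a) ∧ ∀ a : ℤ, (l : ℤ) < |a| → w a = a}

/-- The Coxeter length of a signed permutation:
`ℓ(w) = #{(i,j) : 1 ≤ i < j ≤ l, w(i) > w(j)} − Σ_{1 ≤ j ≤ l, w(j) < 0} w(j)`. -/
noncomputable def signedLen (l : ℕ) (w : Equiv.Perm ℤ) : ℤ :=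
  (((Finset.Icc (1 : ℤ) l ×ˢ Finset.Icc (1 : ℤ) l).filter
      (fun p => p.1 < p.2 ∧ w p.2 < w p.1)).card : ℤ)
    - ∑ j ∈ Finset.Icc (1 : ℤ) l, (if w j < 0 then w j else 0)

/-- The Coxeter generator `s_i` of the group of signed permutations: for `1 ≤ i ≤ l − 1`
it exchanges `l − i` and `l − i + 1` (and `−(l−i)` and `−(l−i+1)`); `s_l` is the sign
change in the first coordinate, exchanging `1` and `−1`. -/
def signedGen (l : ℕ) (i : ℕ) : Equiv.Perm ℤ :=
  if i = l then Equiv.swap 1 (-1)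
  else if 1 ≤ i ∧ i ≤ l - 1 then
    (Equiv.swap ((l : ℤ) - i) ((l : ℤ) - i + 1)) *
      (Equiv.swap (-((l : ℤ) - i)) (-((l : ℤ) - i) - 1))
  else 1

/-- The product `σ_m ⋯ σ_1` of the first `m` generators of a sequence of generators
(with indices `j_1, …, j_m ∈ {1, …, l}`). -/
def signedProd (l : ℕ) (js : ℕ → ℕ) (m : ℕ) : Equiv.Perm ℤ :=
  (((List.range' 1 m).map (fun k => signedGen l (js k))).reverse).prod

/-- The weak left order: `w <_∅ w'` iff `w' = σ_r ⋯ σ_1 w` for generators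
`σ_m = s_{j_m}` with `ℓ(σ_m ⋯ σ_1 w) = ℓ(w) + m` for all `1 ≤ m ≤ r`. -/
def signedWeakLt (l : ℕ) (w w' : Equiv.Perm ℤ) : Prop :=
  ∃ r : ℕ, 1 ≤ r ∧ ∃ js : ℕ → ℕ,
    (∀ m, 1 ≤ m → m ≤ r → 1 ≤ js m ∧ js m ≤ l) ∧
    (∀ m, 1 ≤ m → m ≤ r → signedLen l (signedProd l js m * w) = signedLen l w + m) ∧
    signedProd l js r * w = w'

/-- The longest element `w_Δ = [−1, −2, …, −l]`, i.e. minus the identity on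
`{−l, …, −1, 1, …, l}`. -/
def signedLongest (l : ℕ) : Equiv.Perm ℤ :=
  Function.Involutive.toPerm (fun x => if |x| ≤ (l : ℤ) then -x else x)
    (by
      intro x
      by_cases h : |x| ≤ (l : ℤ)
      · simp only [if_pos h, abs_neg, if_pos h, neg_neg]
      · simp only [if_neg h, if_neg h])

/-- The element `u₀ = [1, …, l−1, −l]` (the nontrivial element of `W_Ω` in type `B_l`). -/
def uB (l : ℕ) : Equiv.Perm ℤ := Equiv.swap (l : ℤ) (-(l : ℤ))

/-!
Record a signed permutation `w` by the one-line notation `v = [w⁻¹(1), …, w⁻¹(l)]` of its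
inverse. An ascent in the weak left order exchanges two adjacent entries `v a < v (a + 1)` or
negates a positive first entry, and `u₀` negates the last entry. Starting from `[-1, …, -l]`,
the entries are made positive from the back: once `-(n + 2), …, -l` are positive, the block
`[-(n + 1), n + 2, …, l]` is rotated through all its positions, each rotation carrying the
negated first entry to the end, where `u₀` makes it positive again. A positive entry is negated
by carrying it to the front across the smaller entries before it, and back.
-/

namespace SignedPermSet

variable {l : ℕ} {v w : Perm ℤ}

lemma apply_neg (hw : w ∈ SignedPermSet l) (a : ℤ) : w (-a) = -w a := hw.1 a

lemma apply_zero (hw : w ∈ SignedPermSet l) : w 0 = 0 := by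
  have := apply_neg hw 0
  rw [neg_zero] at this
  omega

lemma apply_of_lt_abs (hw : w ∈ SignedPermSet l) {a : ℤ} (ha : (l : ℤ) < |a|) : w a = a :=
  hw.2 a ha

lemma one_mem : (1 : Perm ℤ) ∈ SignedPermSet l :=
  ⟨fun _ => rfl, fun _ _ => rfl⟩

lemma mul_mem (hv : v ∈ SignedPermSet l) (hw : w ∈ SignedPermSet l) :
    v * w ∈ SignedPermSet l :=
  ⟨fun a => by simp only [Perm.mul_apply, apply_neg hw, apply_neg hv],
    fun a ha => by simp only [Perm.mul_apply, apply_of_lt_abs hw ha, apply_of_lt_abs hv ha]⟩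

lemma ne_zero_of_apply_eq (hw : w ∈ SignedPermSet l) {P a : ℤ} (h : w P = a) (ha : a ≠ 0) :
    P ≠ 0 := by
  rintro rfl
  exact ha (h ▸ apply_zero hw)

lemma abs_le_of_apply_eq (hw : w ∈ SignedPermSet l) {P a : ℤ} (h : w P = a) (ha : |a| ≤ l) :
    |P| ≤ l := by
  by_contra hP
  rw [apply_of_lt_abs hw (not_le.mp hP)] at h
  exact hP (h ▸ ha)

lemma ext_of_eqOn (hv : v ∈ SignedPermSet l) (hw : w ∈ SignedPermSet l)
    (h : ∀ i, 1 ≤ i → i ≤ (l : ℤ) → v i = w i) : v = w := by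
  ext x
  rcases lt_trichotomy x 0 with hx | rfl | hx
  · by_cases hxl : -(l : ℤ) ≤ x
    · rw [← neg_neg x, apply_neg hv, apply_neg hw, h (-x) (by omega) (by omega)]
    · rw [apply_of_lt_abs hv, apply_of_lt_abs hw] <;> rw [abs_of_neg hx] <;> omega
  · rw [apply_zero hv, apply_zero hw]
  · by_cases hxl : x ≤ l
    · exact h x hx hxl
    · rw [apply_of_lt_abs hv, apply_of_lt_abs hw] <;> rw [abs_of_pos hx] <;> omega

lemma swap_neg_mem {b : ℤ} (hb : |b| ≤ l) : swap b (-b) ∈ SignedPermSet l := by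
  refine ⟨fun z => ?_, fun z hz => ?_⟩
  · simp only [swap_apply_def]; split_ifs <;> omega
  · rw [swap_apply_of_ne_of_ne (by rintro rfl; omega)
      (by rintro rfl; rw [abs_neg] at hz; omega)]

end SignedPermSet

def adjSwap (a : ℤ) : Perm ℤ := swap a (a + 1) * swap (-a) (-a - 1)

lemma adjSwap_apply {a : ℤ} (ha : 1 ≤ a) (z : ℤ) :
    adjSwap a z = if z = a then a + 1 else if z = a + 1 then a
      else if z = -a then -a - 1 else if z = -a - 1 then -a else z := by
  simp only [adjSwap, Perm.mul_apply, swap_apply_def]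
  split_ifs <;> omega

lemma adjSwap_mem {l : ℕ} {a : ℤ} (ha : 1 ≤ a) (hal : a + 1 ≤ l) :
    adjSwap a ∈ SignedPermSet l := by
  refine ⟨fun z => ?_, fun z hz => ?_⟩
  · rw [adjSwap_apply ha, adjSwap_apply ha]; split_ifs <;> omega
  · have := lt_abs.mp hz
    rw [adjSwap_apply ha]; split_ifs <;> omega

lemma signedGen_eq_adjSwap {l i : ℕ} (hi : 1 ≤ i) (hil : i < l) :
    signedGen l i = adjSwap ((l : ℤ) - i) := by
  rw [signedGen, if_neg hil.ne, if_pos ⟨hi, by omega⟩]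
  rfl

lemma signedGen_self (l : ℕ) : signedGen l l = swap 1 (-1) := if_pos rfl

lemma signedGen_mem {l i : ℕ} (hi : 1 ≤ i) (hil : i ≤ l) :
    signedGen l i ∈ SignedPermSet l := by
  rcases hil.lt_or_eq with hil | rfl
  · rw [signedGen_eq_adjSwap hi hil]
    exact adjSwap_mem (by omega) (by omega)
  · rw [signedGen_self]
    exact SignedPermSet.swap_neg_mem (by rw [abs_one]; exact_mod_cast hi)

section signedLen

variable {l : ℕ}

lemma signedLen_congr {w w' : Perm ℤ} (h : ∀ i, 1 ≤ i → i ≤ (l : ℤ) → w i = w' i) :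
    signedLen l w = signedLen l w' := by
  have hmem : ∀ i ∈ Finset.Icc (1 : ℤ) l, w i = w' i := fun i hi =>
    h i (Finset.mem_Icc.mp hi).1 (Finset.mem_Icc.mp hi).2
  have hinv : (Finset.Icc (1 : ℤ) l ×ˢ Finset.Icc (1 : ℤ) l).filter
        (fun p => p.1 < p.2 ∧ w p.2 < w p.1) =
      (Finset.Icc (1 : ℤ) l ×ˢ Finset.Icc (1 : ℤ) l).filter
        (fun p => p.1 < p.2 ∧ w' p.2 < w' p.1) :=
    Finset.filter_congr fun p hp => by
      rw [Finset.mem_product] at hp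
      rw [hmem _ hp.1, hmem _ hp.2]
  unfold signedLen
  rw [hinv, Finset.sum_congr rfl fun i hi => by rw [hmem i hi]]

/-- The values are only permuted, and `(P, Q)` is the one new inversion since no value lies
strictly between `w P` and `w Q`. -/
lemma signedLen_mul_swap {w : Perm ℤ} {P Q : ℤ} (hP : 1 ≤ P) (hPQ : P < Q) (hQ : Q ≤ l)
    (hwQ : w Q = w P + 1) : signedLen l (w * swap P Q) = signedLen l w + 1 := by
  have hinjP : ∀ i, w i = w P → i = P := fun i h => w.injective h
  have hinjQ : ∀ i, w i = w Q → i = Q := fun i h => w.injective h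
  have hinv : (Finset.Icc (1 : ℤ) l ×ˢ Finset.Icc (1 : ℤ) l).filter
        (fun p => p.1 < p.2 ∧ (w * swap P Q) p.2 < (w * swap P Q) p.1) =
      insert (P, Q) ((Finset.Icc (1 : ℤ) l ×ˢ Finset.Icc (1 : ℤ) l).filter
        (fun p => p.1 < p.2 ∧ w p.2 < w p.1)) := by
    ext ⟨i, j⟩
    have := hinjP i; have := hinjP j; have := hinjQ i; have := hinjQ j
    rw [Finset.mem_insert, Finset.mem_filter, Finset.mem_filter]
    simp only [Finset.mem_product, Finset.mem_Icc, Prod.mk.injEq, Perm.mul_apply, swap_apply_def]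
    split_ifs <;> subst_vars <;> omega
  have hnotMem : (P, Q) ∉ (Finset.Icc (1 : ℤ) l ×ˢ Finset.Icc (1 : ℤ) l).filter
      (fun p => p.1 < p.2 ∧ w p.2 < w p.1) := by
    simp only [Finset.mem_filter]
    omega
  have hsum : ∑ j ∈ Finset.Icc (1 : ℤ) l,
        (if (w * swap P Q) j < 0 then (w * swap P Q) j else 0) =
      ∑ j ∈ Finset.Icc (1 : ℤ) l, (if w j < 0 then w j else 0) :=
    (swap P Q).sum_comp _ (fun j => if w j < 0 then w j else 0) fun i hi => by
      by_contra hc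
      simp only [Finset.coe_Icc, Set.mem_Icc] at hc
      exact hi (swap_apply_of_ne_of_ne (by rintro rfl; omega) (by rintro rfl; omega))
  unfold signedLen
  rw [hinv, Finset.card_insert_of_notMem hnotMem, hsum]
  push_cast
  ring

lemma signedLen_eq_add_one {w w' : Perm ℤ} {P : ℤ} (hP : 1 ≤ P) (hPl : P ≤ l)
    (hord : ∀ i j, 1 ≤ i → i ≤ (l : ℤ) → 1 ≤ j → j ≤ (l : ℤ) →
      (w' j < w' i ↔ w j < w i))
    (hneg : ∀ i, 1 ≤ i → i ≤ (l : ℤ) →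
      (if w' i < 0 then w' i else 0) = (if w i < 0 then w i else 0) - if i = P then 1 else 0) :
    signedLen l w' = signedLen l w + 1 := by
  have hinv : (Finset.Icc (1 : ℤ) l ×ˢ Finset.Icc (1 : ℤ) l).filter
        (fun p => p.1 < p.2 ∧ w' p.2 < w' p.1) =
      (Finset.Icc (1 : ℤ) l ×ˢ Finset.Icc (1 : ℤ) l).filter
        (fun p => p.1 < p.2 ∧ w p.2 < w p.1) := by
    refine Finset.filter_congr fun p hp => ?_
    simp only [Finset.mem_product, Finset.mem_Icc] at hp
    rw [hord p.1 p.2 hp.1.1 hp.1.2 hp.2.1 hp.2.2]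
  have hsum : ∑ j ∈ Finset.Icc (1 : ℤ) l, (if w' j < 0 then w' j else 0) =
      ∑ j ∈ Finset.Icc (1 : ℤ) l, (if w j < 0 then w j else 0) - 1 := by
    rw [Finset.sum_congr rfl fun i hi =>
      hneg i (Finset.mem_Icc.mp hi).1 (Finset.mem_Icc.mp hi).2, Finset.sum_sub_distrib,
      Finset.sum_ite_eq', if_pos (Finset.mem_Icc.mpr ⟨hP, hPl⟩)]
  unfold signedLen
  rw [hinv, hsum]
  ring

end signedLen

section ascent

variable {l : ℕ} {w : Perm ℤ}

lemma adjSwap_mul_apply_eq (hw : w ∈ SignedPermSet l) {a P Q : ℤ} (ha : 1 ≤ a) (hP : 1 ≤ P)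
    (hQ : 1 ≤ Q) (hb : w P = a ∨ w P = -a - 1) (hwQ : w Q = w P + 1) {i : ℤ} (hi : 1 ≤ i) :
    (adjSwap a * w) i = (w * swap P Q) i := by
  have h1 : w i = w P → i = P := fun h => w.injective h
  have h2 : w i = w Q → i = Q := fun h => w.injective h
  have h3 : w i ≠ -w P := fun h => by
    rw [← SignedPermSet.apply_neg hw] at h; have := w.injective h; omega
  have h4 : w i ≠ -w Q := fun h => by
    rw [← SignedPermSet.apply_neg hw] at h; have := w.injective h; omega
  rw [Perm.mul_apply, Perm.mul_apply, adjSwap_apply ha, swap_apply_def]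
  split_ifs <;> subst_vars <;> omega

lemma signedLen_adjSwap_mul_of_neg_pos (hw : w ∈ SignedPermSet l) {a P Q : ℤ} (ha : 1 ≤ a)
    (hP : 1 ≤ P) (hPl : P ≤ l) (hQ : 1 ≤ Q) (hwP : w P = -a) (hwQ : w Q = a + 1) :
    signedLen l (adjSwap a * w) = signedLen l w + 1 := by
  have hne : ∀ i, 1 ≤ i → w i ≠ a ∧ w i ≠ -a - 1 := fun i hi => by
    constructor <;> intro h
    · have := w.injective (h.trans (by rw [SignedPermSet.apply_neg hw, hwP, neg_neg]) :
        w i = w (-P))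
      omega
    · have := w.injective (h.trans (by rw [SignedPermSet.apply_neg hw, hwQ]; ring) :
        w i = w (-Q))
      omega
  refine signedLen_eq_add_one hP hPl (fun i j hi _ hj _ => ?_) (fun i hi _ => ?_)
  · have := hne i hi; have := hne j hj
    simp only [Perm.mul_apply, adjSwap_apply ha]
    split_ifs <;> omega
  · have := hne i hi
    have hiP : w i = -a → i = P := fun h => w.injective (h.trans hwP.symm)
    simp only [Perm.mul_apply, adjSwap_apply ha]
    split_ifs <;> subst_vars <;> omega

lemma signedLen_swap_one_mul (hw : w ∈ SignedPermSet l) {P : ℤ} (hP : 1 ≤ P) (hPl : P ≤ l)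
    (hwP : w P = 1) : signedLen l (swap 1 (-1) * w) = signedLen l w + 1 := by
  have hne : ∀ i, 1 ≤ i → w i ≠ -1 ∧ w i ≠ 0 := fun i hi => by
    constructor <;> intro h
    · have := w.injective (h.trans (by rw [SignedPermSet.apply_neg hw, hwP]) : w i = w (-P))
      omega
    · have := w.injective (h.trans (SignedPermSet.apply_zero hw).symm)
      omega
  refine signedLen_eq_add_one hP hPl (fun i j hi _ hj _ => ?_) (fun i hi _ => ?_)
  · have := hne i hi; have := hne j hj
    simp only [Perm.mul_apply, swap_apply_def]
    split_ifs <;> omega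
  · have := hne i hi
    have hiP : w i = 1 → i = P := fun h => w.injective (h.trans hwP.symm)
    simp only [Perm.mul_apply, swap_apply_def]
    split_ifs <;> subst_vars <;> omega

/-- Here `P < Q` may be signed positions: `a` stands before `a + 1` in `[w(-l), …, w(l)]`. -/
lemma signedLen_adjSwap_mul (hw : w ∈ SignedPermSet l) {a P Q : ℤ} (ha : 1 ≤ a)
    (hal : a + 1 ≤ l) (hwP : w P = a) (hwQ : w Q = a + 1) (hPQ : P < Q) :
    signedLen l (adjSwap a * w) = signedLen l w + 1 := by
  have hP0 := SignedPermSet.ne_zero_of_apply_eq hw hwP (by omega)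
  have hQ0 := SignedPermSet.ne_zero_of_apply_eq hw hwQ (by omega)
  obtain ⟨hPl', hPl⟩ := abs_le.mp <|
    SignedPermSet.abs_le_of_apply_eq hw hwP (by rw [abs_of_pos (by omega)]; omega)
  obtain ⟨hQl', hQl⟩ := abs_le.mp <|
    SignedPermSet.abs_le_of_apply_eq hw hwQ (by rw [abs_of_pos (by omega)]; omega)
  have hwnP : w (-P) = -a := by rw [SignedPermSet.apply_neg hw, hwP]
  have hwnQ : w (-Q) = -a - 1 := by rw [SignedPermSet.apply_neg hw, hwQ]; ring
  rcases lt_or_gt_of_ne hP0 with hP | hP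
  · rcases lt_or_gt_of_ne hQ0 with hQ | hQ
    · rw [signedLen_congr fun i hi _ => adjSwap_mul_apply_eq hw ha (P := -Q) (Q := -P)
        (by omega) (by omega) (Or.inr hwnQ) (by omega) hi]
      exact signedLen_mul_swap (by omega) (by omega) (by omega) (by omega)
    · exact signedLen_adjSwap_mul_of_neg_pos hw ha (by omega) (by omega) (by omega) hwnP hwQ
  · rw [signedLen_congr fun i hi _ => adjSwap_mul_apply_eq hw ha (P := P) (Q := Q) (by omega)
      (by omega) (Or.inl hwP) (by omega) hi]
    exact signedLen_mul_swap (by omega) hPQ hQl (by omega)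

end ascent

section moves

variable {l : ℕ}

def IsStep (l : ℕ) (x y : Perm ℤ) : Prop :=
  y ∈ SignedPermSet l ∧ (signedWeakLt l x y ∨ y = uB l * x)

abbrev Reaches (l : ℕ) : Perm ℤ → Perm ℤ → Prop := Relation.ReflTransGen (IsStep l)

lemma Reaches.mem {x y : Perm ℤ} (h : Reaches l x y) (hx : x ∈ SignedPermSet l) :
    y ∈ SignedPermSet l := by
  cases h with
  | refl => exact hx
  | tail _ hstep => exact hstep.1

lemma signedWeakLt_signedGen_mul {i : ℕ} {w : Perm ℤ} (hi : 1 ≤ i) (hil : i ≤ l)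
    (hlen : signedLen l (signedGen l i * w) = signedLen l w + 1) :
    signedWeakLt l w (signedGen l i * w) := by
  have hprod : signedProd l (fun _ => i) 1 = signedGen l i := by
    simp [signedProd, show List.range' 1 1 = [1] from rfl]
  refine ⟨1, le_rfl, fun _ => i, fun _ _ _ => ⟨hi, hil⟩, fun m hm1 hm2 => ?_, by rw [hprod]⟩
  obtain rfl : m = 1 := le_antisymm hm2 hm1
  rw [hprod, hlen, Nat.cast_one]

lemma isStep_signedGen_mul {i : ℕ} {w : Perm ℤ} (hw : w ∈ SignedPermSet l) (hi : 1 ≤ i)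
    (hil : i ≤ l) (hlen : signedLen l (signedGen l i * w) = signedLen l w + 1) :
    IsStep l w (signedGen l i * w) :=
  ⟨SignedPermSet.mul_mem (signedGen_mem hi hil) hw,
    Or.inl (signedWeakLt_signedGen_mul hi hil hlen)⟩

def IsInvWord (l : ℕ) (w : Perm ℤ) (v : ℤ → ℤ) : Prop :=
  ∀ i, 1 ≤ i → i ≤ (l : ℤ) → w (v i) = i

def WordReach (l : ℕ) (v v' : ℤ → ℤ) : Prop :=
  ∀ w ∈ SignedPermSet l, IsInvWord l w v → ∃ w', Reaches l w w' ∧ IsInvWord l w' v'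

namespace WordReach

variable {u v v' : ℤ → ℤ}

lemma of_eqOn (h : ∀ i, 1 ≤ i → i ≤ (l : ℤ) → v i = v' i) : WordReach l v v' :=
  fun w _ hv => ⟨w, .refl, fun i h1 h2 => by rw [← h i h1 h2]; exact hv i h1 h2⟩

lemma trans (h : WordReach l u v) (h' : WordReach l v v') : WordReach l u v' := by
  intro w hw hu
  obtain ⟨w₁, hr₁, hv⟩ := h w hw hu
  obtain ⟨w₂, hr₂, hv'⟩ := h' w₁ (hr₁.mem hw) hv
  exact ⟨w₂, hr₁.trans hr₂, hv'⟩

lemma congr_right (h : WordReach l u v) (h' : ∀ i, 1 ≤ i → i ≤ (l : ℤ) → v i = v' i) :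
    WordReach l u v' :=
  h.trans (of_eqOn h')

end WordReach

variable {v : ℤ → ℤ}

lemma wordReach_swap {a : ℤ} (ha : 1 ≤ a) (hal : a + 1 ≤ l) (hlt : v a < v (a + 1)) :
    WordReach l v (fun i => if i = a then v (a + 1) else if i = a + 1 then v a else v i) := by
  intro w hw hv
  obtain ⟨i, rfl⟩ : ∃ i : ℕ, a = l - i := ⟨(l - a).toNat, by omega⟩
  have hgen : signedGen l i = adjSwap ((l : ℤ) - i) := signedGen_eq_adjSwap (by omega) (by omega)
  have hva := hv _ ha (by omega)
  have hva' := hv _ (by omega) hal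
  refine ⟨signedGen l i * w, .single (isStep_signedGen_mul hw (by omega) (by omega) ?_), ?_⟩
  · rw [hgen]
    exact signedLen_adjSwap_mul hw ha hal hva hva' hlt
  · intro k hk hkl
    dsimp only
    rw [hgen, Perm.mul_apply]
    split_ifs with h1 h2
    · rw [hva', adjSwap_apply ha, if_neg (by omega), if_pos rfl, h1]
    · rw [hva, adjSwap_apply ha, if_pos rfl, h2]
    · rw [hv k hk hkl, adjSwap_apply ha]
      split_ifs <;> omega

lemma wordReach_negFirst (hl : 1 ≤ l) (hpos : 0 < v 1) :
    WordReach l v (fun i => if i = 1 then -v 1 else v i) := by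
  intro w hw hv
  have hv1 := hv 1 le_rfl (by exact_mod_cast hl)
  have hv1l := SignedPermSet.abs_le_of_apply_eq hw hv1 (by simp; exact_mod_cast hl)
  rw [abs_of_pos hpos] at hv1l
  refine ⟨signedGen l l * w, .single (isStep_signedGen_mul hw hl le_rfl ?_), ?_⟩
  · rw [signedGen_self]
    exact signedLen_swap_one_mul hw hpos hv1l hv1
  · intro k hk hkl
    dsimp only
    rw [signedGen_self, Perm.mul_apply]
    split_ifs with hk1
    · rw [SignedPermSet.apply_neg hw, hv1, swap_apply_right]; omega
    · rw [hv k hk hkl, swap_apply_of_ne_of_ne] <;> omega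

lemma wordReach_negLast : WordReach l v (fun i => if i = l then -v l else v i) := by
  intro w hw hv
  have hstep : IsStep l w (uB l * w) :=
    ⟨SignedPermSet.mul_mem (SignedPermSet.swap_neg_mem (by simp)) hw, Or.inr rfl⟩
  refine ⟨uB l * w, .single hstep, fun k hk hkl => ?_⟩
  dsimp only
  rw [uB, Perm.mul_apply]
  split_ifs with hkl'
  · rw [SignedPermSet.apply_neg hw, hv l (by omega) le_rfl, swap_apply_right, hkl']
  · rw [hv k hk hkl, swap_apply_of_ne_of_ne] <;> omega

end moves

section path

variable {l : ℕ} {v : ℤ → ℤ}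

lemma wordReach_bubbleRight {j m : ℤ} (hj : 1 ≤ j) (hjm : j ≤ m) (hm : m ≤ l)
    (hlt : ∀ i, j < i → i ≤ m → v j < v i) :
    WordReach l v
      (fun i => if j ≤ i ∧ i < m then v (i + 1) else if i = m then v j else v i) := by
  induction m, hjm using Int.leInduction with
  | base => exact .of_eqOn fun i _ _ => by split_ifs <;> first | omega | congr 1
  | succ m hjm ih =>
    refine (ih (by omega) fun i h1 h2 => hlt i h1 (by omega)).trans
      ((wordReach_swap (a := m) (by omega) hm ?_).congr_right fun i _ _ => ?_)
    · simp only [lt_irrefl, and_false, if_true, if_neg (by omega : ¬ m + 1 = m),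
        if_neg (by omega : ¬ (j ≤ m + 1 ∧ m + 1 < m))]
      exact hlt _ (by omega) le_rfl
    · split_ifs <;> first | omega | (congr 1; omega)

lemma wordReach_bubbleLeft {j m : ℤ} (hj : 1 ≤ j) (hjm : j ≤ m) (hm : m ≤ l)
    (hlt : ∀ i, j ≤ i → i < m → v i < v m) :
    WordReach l v
      (fun i => if i = j then v m else if j < i ∧ i ≤ m then v (i - 1) else v i) := by
  induction j, hjm using Int.leInductionDown with
  | base => exact .of_eqOn fun i _ _ => by split_ifs <;> first | omega | congr 1
  | pred j hjm ih =>
    refine (ih (by omega) fun i h1 h2 => hlt i (by omega) h2).trans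
      ((wordReach_swap (a := j - 1) (by omega) (by omega) ?_).congr_right fun i _ _ => ?_)
    · simp only [sub_add_cancel, if_true, if_neg (by omega : ¬ j - 1 = j),
        if_neg (by omega : ¬ (j < j - 1 ∧ j - 1 ≤ m))]
      exact hlt _ le_rfl (by omega)
    · split_ifs <;> first | omega | (congr 1; omega)

lemma wordReach_negAt {j : ℤ} (hj : 1 ≤ j) (hjl : j ≤ l) (hpos : 0 < v j)
    (hsmall : ∀ i, 1 ≤ i → i < j → |v i| < v j) :
    WordReach l v (fun i => if i = j then -v j else v i) := by
  refine ((wordReach_bubbleLeft le_rfl hj hjl fun i h1 h2 =>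
    (abs_lt.mp (hsmall i h1 h2)).2).trans ((wordReach_negFirst (by omega) ?_).trans
      (wordReach_bubbleRight le_rfl hj hjl fun i h1 h2 => ?_))).congr_right fun i h1 h2 => ?_
  · simpa using hpos
  · simp only [if_true, if_neg (by omega : ¬ i = 1), if_pos (by omega : 1 < i ∧ i ≤ j)]
    have := abs_lt.mp (hsmall (i - 1) (by omega) (by omega))
    omega
  · simp only [if_true]
    split_ifs <;> first | omega | (congr 1; omega)

lemma wordReach_sendToEnd {j : ℤ} (hj : 1 ≤ j) (hjl : j ≤ l)
    (hlt : ∀ i, j < i → i ≤ l → v j < v i) :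
    WordReach l v (fun i => if j ≤ i ∧ i < l then v (i + 1) else if i = l then -v j else v i) :=
  ((wordReach_bubbleRight hj hjl le_rfl hlt).trans wordReach_negLast).congr_right fun i _ _ => by
    split_ifs <;> omega

/-- The word `[v 1, …, v n, n + r + 1, …, l, n + 1, …, n + r]`. -/
def rotWord (l : ℕ) (n r : ℤ) (v : ℤ → ℤ) (i : ℤ) : ℤ :=
  if i ≤ n then v i else if i + r ≤ l then i + r else i + r - (l - n)

lemma wordReach_rotWord_succ {n r : ℤ} (hn : 0 ≤ n) (hr : 0 ≤ r) (hrl : n + r < l)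
    (hsmall : ∀ i, 1 ≤ i → i ≤ n → |v i| ≤ n) :
    WordReach l (rotWord l n r v) (rotWord l n (r + 1) v) := by
  have hfirst : rotWord l n r v (n + 1) = n + 1 + r := by
    rw [rotWord, if_neg (by omega), if_pos (by omega)]
  refine ((wordReach_negAt (j := n + 1) (by omega) (by omega) (by omega)
    fun i h1 h2 => ?_).trans (wordReach_sendToEnd (j := n + 1) (by omega) (by omega)
      fun i h1 h2 => ?_)).congr_right fun i h1 h2 => ?_
  · rw [hfirst, rotWord, if_pos (by omega)]
    have := hsmall i h1 (by omega)
    omega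
  · simp only [if_true, if_neg (by omega : ¬ i = n + 1), rotWord, if_neg (by omega : ¬ i ≤ n)]
    split_ifs <;> omega
  · simp only [if_true, rotWord]
    split_ifs <;> omega

lemma wordReach_rotWord {n r₀ r : ℤ} (hn : 0 ≤ n) (hr₀ : 0 ≤ r₀) (hr : r₀ ≤ r)
    (hrl : n + r ≤ l) (hsmall : ∀ i, 1 ≤ i → i ≤ n → |v i| ≤ n) :
    WordReach l (rotWord l n r₀ v) (rotWord l n r v) := by
  induction r, hr using Int.leInduction with
  | base => exact .of_eqOn fun _ _ _ => rfl
  | succ r hr ih =>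
    exact (ih (by omega)).trans (wordReach_rotWord_succ hn (by omega) (by omega) hsmall)

lemma wordReach_positivize (n : ℕ) (hn : n ≤ l)
    (hsmall : ∀ i : ℤ, 1 ≤ i → i ≤ n → |v i| ≤ n)
    (hneg : ∀ i, (n : ℤ) < i → i ≤ l → v i = -i) :
    WordReach l v (fun i => if i ≤ n then v i else i) := by
  obtain ⟨k, hk⟩ : ∃ k, n + k = l := ⟨l - n, by omega⟩
  induction k generalizing n with
  | zero => exact .of_eqOn fun i _ hi => by rw [if_pos (by omega)]
  | succ k ih =>
    have hvn : v (n + 1) = -(n + 1) := hneg (n + 1) (by omega) (by omega)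
    have hsuffix : WordReach l v (fun i => if i ≤ n + 1 then v i else i) := by
      refine (ih (n + 1) (by omega) (fun i h1 h2 => ?_) (fun i h1 h2 => hneg i (by omega) h2)
        (by omega)).congr_right fun i _ _ => by push_cast; rfl
      rcases (show i ≤ n ∨ i = n + 1 by omega) with h | rfl
      · have := hsmall i h1 h; omega
      · push_cast; rw [hvn, abs_neg, abs_of_nonneg (by omega)]
    have hrot₁ : WordReach l (fun i => if i ≤ n + 1 then v i else i) (rotWord l n 1 v) := by
      refine (wordReach_sendToEnd (j := n + 1) (by omega) (by omega) fun i h1 h2 => ?_).congr_right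
        fun i h1 h2 => ?_
      · simp only [if_pos le_rfl, if_neg (by omega : ¬ i ≤ n + 1)]
        omega
      · simp only [rotWord]
        split_ifs <;> omega
    refine (hsuffix.trans (hrot₁.trans (wordReach_rotWord (r := l - n) (by omega) zero_le_one
      (by omega) (by omega) hsmall))).congr_right fun i h1 h2 => ?_
    simp only [rotWord]
    split_ifs <;> omega

end path

lemma signedLongest_mem (l : ℕ) : signedLongest l ∈ SignedPermSet l := by
  refine ⟨fun z => ?_, fun z hz => ?_⟩
  · change (if |-z| ≤ (l : ℤ) then - -z else -z) = -(if |z| ≤ (l : ℤ) then -z else z)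
    rw [abs_neg]
    split_ifs <;> omega
  · exact if_neg (not_le.mpr hz)

lemma isInvWord_signedLongest (l : ℕ) : IsInvWord l (signedLongest l) (fun i => -i) :=
  fun i h1 h2 => by
    change (if |-i| ≤ (l : ℤ) then - -i else -i) = i
    rw [abs_neg, abs_of_pos (by omega), if_pos h2, neg_neg]

lemma Relation.ReflTransGen.exists_seq {α : Type*} {r : α → α → Prop} {a b : α}
    (h : Relation.ReflTransGen r a b) :
    ∃ n, ∃ f : ℕ → α, f 0 = a ∧ f n = b ∧ ∀ i < n, r (f i) (f (i + 1)) := by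
  induction h with
  | refl => exact ⟨0, fun _ => a, rfl, rfl, by omega⟩
  | @tail b c _ hbc ih =>
    obtain ⟨n, f, h0, hn, hf⟩ := ih
    refine ⟨n + 1, fun i => if i ≤ n then f i else c, by simpa using h0, by simp,
      fun i hi => ?_⟩
    rcases (show i < n ∨ i = n by omega) with hi | rfl
    · simpa [hi.le, Nat.succ_le_of_lt hi] using hf i hi
    · simpa [hn] using hbc

lemma reaches_signedLongest_one (l : ℕ) : Reaches l (signedLongest l) 1 := by
  obtain ⟨w, hreach, hw⟩ := wordReach_positivize 0 (Nat.zero_le l) (fun _ _ _ => by omega)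
    (fun _ _ _ => rfl) _ (signedLongest_mem l) (isInvWord_signedLongest l)
  convert hreach
  refine (SignedPermSet.ext_of_eqOn (hreach.mem (signedLongest_mem l)) SignedPermSet.one_mem
    fun i h1 h2 => ?_).symm
  simpa [if_neg (by omega : ¬ i ≤ 0)] using hw i h1 h2

theorem statement_10_general (l : ℕ) :
    ∃ (r : ℕ) (w : ℕ → Equiv.Perm ℤ),
      (∀ i, i ≤ r → w i ∈ SignedPermSet l) ∧
      w 0 = signedLongest l ∧ w r = 1 ∧
      ∀ i, 1 ≤ i → i ≤ r →
        signedWeakLt l (w (i - 1)) (w i) ∨ w i = uB l * w (i - 1) := by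
  obtain ⟨r, w, h0, hr, hstep⟩ := (reaches_signedLongest_one l).exists_seq
  refine ⟨r, w, fun i hi => ?_, h0, hr, fun i h1 h2 => ?_⟩
  · cases i with
    | zero => exact h0 ▸ signedLongest_mem l
    | succ i => exact (hstep i hi).1
  · obtain ⟨i, rfl⟩ : ∃ j, i = j + 1 := ⟨i - 1, by omega⟩
    exact (hstep i (by omega)).2

theorem statement_10 (l : ℕ) (hl : 1 ≤ l) :
    ∃ (r : ℕ) (w : ℕ → Equiv.Perm ℤ),
      (∀ i, i ≤ r → w i ∈ SignedPermSet l) ∧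
      w 0 = signedLongest l ∧ w r = 1 ∧
      ∀ i, 1 ≤ i → i ≤ r →
        signedWeakLt l (w (i - 1)) (w i) ∨ w i = uB l * w (i - 1) :=
  statement_10_general l
end
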